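/- Corollary 2.4: if a, A ∈ K with Re(conj(a)·A) > 0 and x, y, z ∈ X satisfy Re(Ay − x, x − ay | z) ≥ 0, then 0 ≤ ‖x|z‖²‖y|z‖² − |(x, y | z)|² ≤ (1/4)·(|A − a|²/Re(conj(a)A))·|(x, y | z)|². -/

import Mathlib

open RCLike

/-- A 2-inner product space over `𝕜 = ℝ` or `ℂ`. -/
structure TwoIP (𝕜 : Type) (X : Type) [RCLike 𝕜] [AddCommGroup X] [Module 𝕜 X] where
  ip : X → X → X → 𝕜
  re_nonneg : ∀ x z : X, 0 ≤ re (ip x x z)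
  im_zero : ∀ x z : X, im (ip x x z) = 0
  eq_zero_iff : ∀ x z : X, ip x x z = 0 ↔ ¬ LinearIndependent 𝕜 ![x, z]
  swap : ∀ x z : X, ip x x z = ip z z x
  conj_symm : ∀ x y z : X, ip x y z = (starRingEnd 𝕜) (ip y x z)
  smul_left : ∀ (α : 𝕜) (x y z : X), ip (α • x) y z = α * ip x y z
  add_left : ∀ x x' y z : X, ip (x + x') y z = ip x y z + ip x' y z

/-!
Expanding the hypothesis gives `‖x|z‖² + Re(āA)‖y|z‖² ≤ Re((A + a)·conj(x, y|z)) ≤ |A + a|·|(x, y|z)|`.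
By AM-GM the left side is at least `2√(Re(āA))·‖x|z‖‖y|z‖`, and `|A + a|² = |A - a|² + 4 Re(āA)`,
which yields the upper bound; the lower bound is Cauchy–Schwarz for the semi-inner product
`(·, ·|z)`.
-/

lemma RCLike.norm_add_sq_eq_norm_sub_sq_add {𝕜 : Type} [RCLike 𝕜] (a A : 𝕜) :
    ‖A + a‖ ^ 2 = ‖A - a‖ ^ 2 + 4 * re ((starRingEnd 𝕜) a * A) := by
  simp only [norm_sq_eq_def, map_add, map_sub, mul_re, conj_re, conj_im]
  ring

lemma mul_sub_sq_le_of_add_mul_le {p q r K n : ℝ} (hp : 0 ≤ p) (hq : 0 ≤ q) (hr : 0 < r)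
    (h : p + r * q ≤ K * n) :
    p * q - n ^ 2 ≤ (1 / 4) * ((K ^ 2 - 4 * r) / r) * n ^ 2 := by
  have amgm : 4 * r * (p * q) ≤ (p + r * q) ^ 2 := by nlinarith [sq_nonneg (p - r * q)]
  have hsq : (p + r * q) ^ 2 ≤ (K * n) ^ 2 := pow_le_pow_left₀ (by positivity) h 2
  rw [show (1 / 4) * ((K ^ 2 - 4 * r) / r) * n ^ 2 = ((K * n) ^ 2 - 4 * r * n ^ 2) / (4 * r) by
    field_simp, le_div_iff₀ (by positivity)]
  nlinarith

namespace TwoIP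

variable {𝕜 X : Type} [RCLike 𝕜] [AddCommGroup X] [Module 𝕜 X] (T : TwoIP 𝕜 X)

lemma ip_add_right (x y y' z : X) : T.ip x (y + y') z = T.ip x y z + T.ip x y' z := by
  rw [T.conj_symm, T.add_left, map_add, ← T.conj_symm, ← T.conj_symm]

lemma ip_smul_right (α : 𝕜) (x y z : X) :
    T.ip x (α • y) z = (starRingEnd 𝕜) α * T.ip x y z := by
  rw [T.conj_symm, T.smul_left, map_mul, ← T.conj_symm]

lemma ip_sub_left (x x' y z : X) : T.ip (x - x') y z = T.ip x y z - T.ip x' y z := by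
  rw [sub_eq_add_neg, T.add_left, ← neg_one_smul 𝕜 x', T.smul_left, neg_one_mul, sub_eq_add_neg]

lemma ip_sub_right (x y y' z : X) : T.ip x (y - y') z = T.ip x y z - T.ip x y' z := by
  rw [sub_eq_add_neg, T.ip_add_right, ← neg_one_smul 𝕜 y', T.ip_smul_right, map_neg, map_one,
    neg_one_mul, sub_eq_add_neg]

lemma ofReal_re_ip_self (x z : X) : ((re (T.ip x x z) : ℝ) : 𝕜) = T.ip x x z :=
  RCLike.ext (by simp) (by simp [T.im_zero])

/-- Mathlib's inner product is conjugate-linear in its first argument, hence the swap. -/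
abbrev toCore (z : X) : PreInnerProductSpace.Core 𝕜 X where
  inner u v := T.ip v u z
  conj_inner_symm u v := (T.conj_symm v u z).symm
  re_inner_nonneg u := T.re_nonneg u z
  add_left u u' v := T.ip_add_right v u u' z
  smul_left u v α := T.ip_smul_right α v u z

lemma norm_ip_sq_le (x y z : X) : ‖T.ip x y z‖ ^ 2 ≤ re (T.ip x x z) * re (T.ip y y z) := by
  have cs := @InnerProductSpace.Core.inner_mul_inner_self_le 𝕜 X _ _ _ (T.toCore z) y x
  change ‖T.ip x y z‖ * ‖T.ip y x z‖ ≤ re (T.ip y y z) * re (T.ip x x z) at cs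
  rwa [T.conj_symm y x, norm_conj, ← sq, mul_comm] at cs

lemma re_ip_smul_sub_sub_smul (x y z : X) (a A : 𝕜) :
    re (T.ip (A • y - x) (x - a • y) z) =
      re ((A + a) * (starRingEnd 𝕜) (T.ip x y z)) - re (T.ip x x z)
        - re ((starRingEnd 𝕜) a * A) * re (T.ip y y z) := by
  simp only [T.ip_sub_left, T.ip_sub_right, T.smul_left, T.ip_smul_right]
  rw [T.conj_symm y x, ← T.ofReal_re_ip_self y]
  simp only [map_sub, map_add, add_mul, mul_re, mul_im, conj_re, conj_im, ofReal_re, ofReal_im]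
  ring

lemma re_ip_self_add_le_of_re_nonneg {x y z : X} {a A : 𝕜}
    (h : 0 ≤ re (T.ip (A • y - x) (x - a • y) z)) :
    re (T.ip x x z) + re ((starRingEnd 𝕜) a * A) * re (T.ip y y z) ≤
      ‖A + a‖ * ‖T.ip x y z‖ := by
  rw [re_ip_smul_sub_sub_smul] at h
  calc re (T.ip x x z) + re ((starRingEnd 𝕜) a * A) * re (T.ip y y z)
      ≤ re ((A + a) * (starRingEnd 𝕜) (T.ip x y z)) := by linarith
    _ ≤ ‖(A + a) * (starRingEnd 𝕜) (T.ip x y z)‖ := re_le_norm _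
    _ = ‖A + a‖ * ‖T.ip x y z‖ := by rw [norm_mul, norm_conj]

end TwoIP

theorem stmt_general {𝕜 X : Type} [RCLike 𝕜] [AddCommGroup X] [Module 𝕜 X]
    (T : TwoIP 𝕜 X) (x y z : X) (a A : 𝕜)
    (ha : 0 < re ((starRingEnd 𝕜) a * A))
    (h : 0 ≤ re (T.ip (A • y - x) (x - a • y) z)) :
    0 ≤ Real.sqrt (re (T.ip x x z)) ^ 2 * Real.sqrt (re (T.ip y y z)) ^ 2 - ‖T.ip x y z‖ ^ 2 ∧
    Real.sqrt (re (T.ip x x z)) ^ 2 * Real.sqrt (re (T.ip y y z)) ^ 2 - ‖T.ip x y z‖ ^ 2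
      ≤ (1/4) * (‖A - a‖ ^ 2 / re ((starRingEnd 𝕜) a * A)) * ‖T.ip x y z‖ ^ 2 := by
  rw [Real.sq_sqrt (T.re_nonneg x z), Real.sq_sqrt (T.re_nonneg y z)]
  refine ⟨sub_nonneg.2 (T.norm_ip_sq_le x y z), ?_⟩
  rw [eq_sub_of_add_eq (RCLike.norm_add_sq_eq_norm_sub_sq_add a A).symm]
  exact mul_sub_sq_le_of_add_mul_le (T.re_nonneg x z) (T.re_nonneg y z) ha
    (T.re_ip_self_add_le_of_re_nonneg h)

theorem stmt {𝕜 X : Type} [RCLike 𝕜] [AddCommGroup X] [Module 𝕜 X]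
    (T : TwoIP 𝕜 X) (hdim : 1 < Module.rank 𝕜 X) (x y z : X) (a A : 𝕜)
    (ha : 0 < re ((starRingEnd 𝕜) a * A))
    (h : 0 ≤ re (T.ip (A • y - x) (x - a • y) z)) :
    0 ≤ Real.sqrt (re (T.ip x x z)) ^ 2 * Real.sqrt (re (T.ip y y z)) ^ 2 - ‖T.ip x y z‖ ^ 2 ∧
    Real.sqrt (re (T.ip x x z)) ^ 2 * Real.sqrt (re (T.ip y y z)) ^ 2 - ‖T.ip x y z‖ ^ 2
      ≤ (1/4) * (‖A - a‖ ^ 2 / re ((starRingEnd 𝕜) a * A)) * ‖T.ip x y z‖ ^ 2 :=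
  stmt_general T x y z a A ha h
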